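/- Let H_A, H_C be Hilbert spaces and X, Y ∈ B(H_A, H_C) two solutions of the Riccati equation T A - C T + T B T = B* (with A = A* ∈ B(H_A), C = C* ∈ B(H_C), B ∈ B(H_C, H_A)). Suppose Σ and Σ̂ are subsets of ℝ with dist(Σ, Σ̂) > 0, and both X and Y satisfy σ(A + B X) ⊆ Σ, σ(C - B* X*) ⊆ Σ̂ (and likewise for Y). Then X = Y. -/
import Mathlib

/-- Rosenblum's corollary: commuting elements of a complex Banach algebra with disjoint
spectra have invertible difference. -/
theorem rosenblum {𝔸 : Type*} [NormedRing 𝔸] [NormedAlgebra ℂ 𝔸] [CompleteSpace 𝔸]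
    {a b : 𝔸} (hab : Commute a b)
    (hd : ∀ z : ℂ, z ∈ spectrum ℂ a → z ∉ spectrum ℂ b) :
    IsUnit (a - b) := by
  by_contra hne
  set S₁ : Subalgebra ℂ 𝔸 := Subalgebra.centralizer ℂ {a, b} with hS₁
  set S : Subalgebra ℂ 𝔸 := Subalgebra.centralizer ℂ (S₁ : Set 𝔸) with hS
  have hmemS₁ : ∀ x : 𝔸, x ∈ S₁ ↔ a * x = x * a ∧ b * x = x * b := by
    intro x
    constructor
    · intro hx
      exact ⟨Subalgebra.mem_centralizer_iff ℂ |>.mp hx a (by simp),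
        Subalgebra.mem_centralizer_iff ℂ |>.mp hx b (by simp)⟩
    · rintro ⟨h1, h2⟩
      rw [Subalgebra.mem_centralizer_iff]
      rintro g (rfl | rfl)
      exacts [h1, h2]
  have haS₁ : a ∈ S₁ := (hmemS₁ a).mpr ⟨rfl, hab.symm.eq⟩
  have hbS₁ : b ∈ S₁ := (hmemS₁ b).mpr ⟨hab.eq, rfl⟩
  have hmemS : ∀ x : 𝔸, x ∈ S ↔ ∀ g ∈ S₁, g * x = x * g := fun x =>
    Subalgebra.mem_centralizer_iff ℂ
  have haS : a ∈ S := (hmemS a).mpr fun g hg => ((hmemS₁ g).mp hg).1.symm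
  have hbS : b ∈ S := (hmemS b).mpr fun g hg => ((hmemS₁ g).mp hg).2.symm
  have hsub : ∀ x ∈ S, x ∈ S₁ := fun x hx =>
    (hmemS₁ x).mpr ⟨(hmemS x).mp hx a haS₁, (hmemS x).mp hx b hbS₁⟩
  have hScomm : ∀ x y : 𝔸, x ∈ S → y ∈ S → x * y = y * x := fun x y hx hy =>
    ((hmemS y).mp hy x (hsub x hx))
  -- S is closed
  have hclosed : IsClosed (S : Set 𝔸) := by
    have : (S : Set 𝔸) = ⋂ g ∈ (S₁ : Set 𝔸), {x : 𝔸 | g * x = x * g} := by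
      ext x
      simp only [SetLike.mem_coe, hmemS, Set.mem_iInter, Set.mem_setOf_eq]
    rw [this]
    exact isClosed_biInter fun g _ =>
      isClosed_eq (continuous_const.mul continuous_id) (continuous_id.mul continuous_const)
  haveI : CompleteSpace S := hclosed.completeSpace_coe
  letI : NormedCommRing S :=
    { (inferInstance : NormedRing S) with
      mul_comm := fun x y => Subtype.ext (hScomm x.1 y.1 x.2 y.2) }
  -- inverse closedness and spectral permanence
  have hspec : ∀ x : S, spectrum ℂ x ⊆ spectrum ℂ (x : 𝔸) := by
    intro x z hz
    by_contra hz'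
    rw [spectrum.mem_iff, not_not] at hz'
    apply spectrum.mem_iff.mp hz
    set w : 𝔸 := algebraMap ℂ 𝔸 z - (x : 𝔸) with hw
    have hwmem : w ∈ S := S.sub_mem (S.algebraMap_mem z) x.2
    have hinvmem : (↑hz'.unit⁻¹ : 𝔸) ∈ S := by
      rw [hmemS]
      intro g hg
      have hcomm : Commute g w := (hmemS w).mp hwmem g hg
      have : Commute g (↑hz'.unit : 𝔸) := by rwa [IsUnit.unit_spec]
      exact this.units_inv_right.eq
    refine ⟨⟨algebraMap ℂ S z - x, ⟨↑hz'.unit⁻¹, hinvmem⟩, ?_, ?_⟩, rfl⟩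
    · apply Subtype.ext
      push_cast
      exact hz'.mul_val_inv
    · apply Subtype.ext
      push_cast
      exact hz'.val_inv_mul
  -- now use characters
  have h0 : (0 : ℂ) ∈ spectrum ℂ ((⟨a, haS⟩ - ⟨b, hbS⟩ : S)) := by
    rw [spectrum.zero_mem_iff]
    intro hu
    exact hne (by simpa using hu.map S.val)
  obtain ⟨φ, hφ⟩ := WeakDual.CharacterSpace.mem_spectrum_iff_exists.mp h0
  have hφab : φ (⟨a, haS⟩ : S) = φ (⟨b, hbS⟩ : S) := by
    have h := map_sub φ (⟨a, haS⟩ : S) (⟨b, hbS⟩ : S)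
    rw [hφ] at h
    exact sub_eq_zero.mp h.symm
  exact hd _ (hspec _ (WeakDual.CharacterSpace.apply_mem_spectrum φ _))
    (hφab ▸ hspec _ (WeakDual.CharacterSpace.apply_mem_spectrum φ (⟨b, hbS⟩ : S)))


set_option synthInstance.maxHeartbeats 1000000
set_option maxHeartbeats 1000000

namespace RiccatiAux

variable {E F : Type*} [NormedAddCommGroup E] [NormedSpace ℂ E]
  [NormedAddCommGroup F] [NormedSpace ℂ F]

/-- Left composition operator `D ↦ T ∘ D`. -/
noncomputable def lcomp (E : Type*) [NormedAddCommGroup E] [NormedSpace ℂ E]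
    (T : F →L[ℂ] F) : (E →L[ℂ] F) →L[ℂ] (E →L[ℂ] F) :=
  ContinuousLinearMap.compL ℂ E F F T

/-- Right composition operator `D ↦ D ∘ T`. -/
noncomputable def rcomp (F : Type*) [NormedAddCommGroup F] [NormedSpace ℂ F]
    (T : E →L[ℂ] E) : (E →L[ℂ] F) →L[ℂ] (E →L[ℂ] F) :=
  (ContinuousLinearMap.compL ℂ E E F).flip T

@[simp] lemma lcomp_apply (T : F →L[ℂ] F) (D : E →L[ℂ] F) : lcomp E T D = T ∘L D := rfl

@[simp] lemma rcomp_apply (T : E →L[ℂ] E) (D : E →L[ℂ] F) : rcomp F T D = D ∘L T := rfl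

lemma lcomp_mul (T T' : F →L[ℂ] F) :
    lcomp E T * lcomp E T' = lcomp E (T * T') := by
  ext D v; rfl

lemma rcomp_mul (T T' : E →L[ℂ] E) :
    rcomp F T * rcomp F T' = rcomp F (T' * T) := by
  ext D v; rfl

lemma lcomp_one : lcomp E (1 : F →L[ℂ] F) = 1 := by ext D v; rfl

lemma rcomp_one : rcomp F (1 : E →L[ℂ] E) = 1 := by ext D v; rfl

lemma lcomp_algebraMap (z : ℂ) :
    lcomp E (algebraMap ℂ (F →L[ℂ] F) z) = algebraMap ℂ ((E →L[ℂ] F) →L[ℂ] (E →L[ℂ] F)) z := by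
  ext D v
  simp [Algebra.algebraMap_eq_smul_one]

lemma rcomp_algebraMap (z : ℂ) :
    rcomp F (algebraMap ℂ (E →L[ℂ] E) z) = algebraMap ℂ ((E →L[ℂ] F) →L[ℂ] (E →L[ℂ] F)) z := by
  ext D v
  simp [Algebra.algebraMap_eq_smul_one]

lemma lcomp_sub (T T' : F →L[ℂ] F) : lcomp E (T - T') = lcomp E T - lcomp E T' :=
  map_sub (ContinuousLinearMap.compL ℂ E F F) T T'

lemma rcomp_sub (T T' : E →L[ℂ] E) : rcomp F (T - T') = rcomp F T - rcomp F T' :=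
  map_sub ((ContinuousLinearMap.compL ℂ E E F).flip) T T'

lemma spectrum_lcomp_subset (T : F →L[ℂ] F) :
    spectrum ℂ (lcomp E T) ⊆ spectrum ℂ T := by
  intro z hz
  by_contra hz'
  rw [spectrum.mem_iff, not_not] at hz'
  apply spectrum.mem_iff.mp hz
  obtain ⟨u, hu⟩ := hz'
  refine ⟨⟨algebraMap ℂ _ z - lcomp E T, lcomp E ↑u⁻¹, ?_, ?_⟩, rfl⟩
  · rw [← lcomp_algebraMap (E := E), ← lcomp_sub, ← hu, lcomp_mul,
      Units.mul_inv, lcomp_one]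
  · rw [← lcomp_algebraMap (E := E), ← lcomp_sub, ← hu, lcomp_mul,
      Units.inv_mul, lcomp_one]

lemma spectrum_rcomp_subset (T : E →L[ℂ] E) :
    spectrum ℂ (rcomp F T) ⊆ spectrum ℂ T := by
  intro z hz
  by_contra hz'
  rw [spectrum.mem_iff, not_not] at hz'
  apply spectrum.mem_iff.mp hz
  obtain ⟨u, hu⟩ := hz'
  refine ⟨⟨algebraMap ℂ _ z - rcomp F T, rcomp F ↑u⁻¹, ?_, ?_⟩, rfl⟩
  · rw [← rcomp_algebraMap (F := F), ← rcomp_sub, ← hu, rcomp_mul,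
      Units.inv_mul, rcomp_one]
  · rw [← rcomp_algebraMap (F := F), ← rcomp_sub, ← hu, rcomp_mul,
      Units.mul_inv, rcomp_one]

lemma commute_lcomp_rcomp (T : F →L[ℂ] F) (T' : E →L[ℂ] E) :
    Commute (lcomp E T) (rcomp F T') := by
  ext D v; rfl

end RiccatiAux


open RiccatiAux in
/-- Uniqueness of solutions of the Riccati equation with prescribed spectral separation:
if `X` and `Y` both solve `T A - C T + T B T = B*` with `σ(A + BX), σ(A + BY) ⊆ Σ` and
`σ(C - B*X*), σ(C - B*Y*) ⊆ Σ̂`, where `dist(Σ, Σ̂) > 0`, then `X = Y`. -/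
theorem riccati_uniqueness
    {HA HC : Type*} [NormedAddCommGroup HA] [InnerProductSpace ℂ HA] [CompleteSpace HA]
    [NormedAddCommGroup HC] [InnerProductSpace ℂ HC] [CompleteSpace HC]
    (A : HA →L[ℂ] HA) (hA : IsSelfAdjoint A)
    (C : HC →L[ℂ] HC) (hC : IsSelfAdjoint C)
    (B : HC →L[ℂ] HA)
    (Sig Sighat : Set ℝ)
    (hsep : ∃ ε > 0, ∀ s ∈ Sig, ∀ t ∈ Sighat, ε ≤ dist s t)
    (X Y : HA →L[ℂ] HC)
    (hX : X ∘L A - C ∘L X + X ∘L B ∘L X = ContinuousLinearMap.adjoint B)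
    (hY : Y ∘L A - C ∘L Y + Y ∘L B ∘L Y = ContinuousLinearMap.adjoint B)
    (hXA : spectrum ℂ (A + B ∘L X) ⊆ Complex.ofReal '' Sig)
    (hXC : spectrum ℂ (C - ContinuousLinearMap.adjoint B ∘L ContinuousLinearMap.adjoint X)
      ⊆ Complex.ofReal '' Sighat)
    (hYA : spectrum ℂ (A + B ∘L Y) ⊆ Complex.ofReal '' Sig)
    (hYC : spectrum ℂ (C - ContinuousLinearMap.adjoint B ∘L ContinuousLinearMap.adjoint Y)
      ⊆ Complex.ofReal '' Sighat) :
    X = Y := by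
  have h := hX.trans hY.symm
  -- Sylvester relation for the difference
  have hsyl : (X - Y) ∘L (A + B ∘L Y) = (C - X ∘L B) ∘L (X - Y) := by
    have hv := fun v => congrArg (fun T : HA →L[ℂ] HC => T v) h
    ext v
    have h1 := hv v
    simp only [ContinuousLinearMap.sub_apply, ContinuousLinearMap.add_apply,
      ContinuousLinearMap.comp_apply, ContinuousLinearMap.coe_comp', Function.comp_apply,
      map_add, map_sub] at h1 ⊢
    rw [← sub_eq_zero] at h1 ⊢
    rw [show X (A v) - Y (A v) + (X (B (Y v)) - Y (B (Y v)))
          - (C (X v) - X (B (X v)) - (C (Y v) - X (B (Y v))))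
        = X (A v) - C (X v) + X (B (X v)) - (Y (A v) - C (Y v) + Y (B (Y v))) from by abel]
    exact h1
  -- spectrum of `C - X ∘L B`
  have hT2 : spectrum ℂ (C - X ∘L B) ⊆ Complex.ofReal '' Sighat := by
    intro z hz
    have h1 : (starRingEnd ℂ) z ∈ spectrum ℂ (star (C - X ∘L B)) := by
      rw [spectrum.map_star, Set.mem_star]
      simpa using hz
    have h2 : star (C - X ∘L B)
        = C - ContinuousLinearMap.adjoint B ∘L ContinuousLinearMap.adjoint X := by
      rw [ContinuousLinearMap.star_eq_adjoint, map_sub, ContinuousLinearMap.adjoint_comp,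
        hC.adjoint_eq]
    rw [h2] at h1
    obtain ⟨t, ht, hteq⟩ := hXC h1
    refine ⟨t, ht, ?_⟩
    have : (starRingEnd ℂ) ((t : ℂ)) = (starRingEnd ℂ) ((starRingEnd ℂ) z) := by rw [hteq]
    rwa [Complex.conj_conj, Complex.conj_ofReal] at this
  -- disjointness of the two spectra
  obtain ⟨ε, hε, hsep⟩ := hsep
  have hd : ∀ z : ℂ, z ∈ spectrum ℂ (lcomp HA (C - X ∘L B)) →
      z ∉ spectrum ℂ (rcomp HC (A + B ∘L Y)) := by
    intro z h1 h2
    obtain ⟨t, ht, rfl⟩ := hT2 (spectrum_lcomp_subset _ h1)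
    obtain ⟨s, hs, hst⟩ := hYA (spectrum_rcomp_subset _ h2)
    have hst' : s = t := by exact_mod_cast hst
    have := hsep s hs t ht
    rw [hst'] at this
    simp only [dist_self] at this
    linarith
  have hcomm : Commute (lcomp HA (C - X ∘L B)) (rcomp HC (A + B ∘L Y)) :=
    commute_lcomp_rcomp (E := HA) (C - X ∘L B) (A + B ∘L Y)
  have hu := @rosenblum ((HA →L[ℂ] HC) →L[ℂ] (HA →L[ℂ] HC))
    (inferInstanceAs (NormedRing _)) (inferInstanceAs (NormedAlgebra ℂ _))
    (inferInstanceAs (CompleteSpace _)) _ _ hcomm hd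
  have h0 : (lcomp HA (C - X ∘L B) - rcomp HC (A + B ∘L Y)) (X - Y) = 0 := by
    rw [ContinuousLinearMap.sub_apply, lcomp_apply, rcomp_apply, ← hsyl, sub_self]
  obtain ⟨u, huu⟩ := hu
  have hD : X - Y = 0 := by
    calc X - Y = (1 : (HA →L[ℂ] HC) →L[ℂ] (HA →L[ℂ] HC)) (X - Y) := rfl
    _ = ((↑u⁻¹ * ↑u : (HA →L[ℂ] HC) →L[ℂ] (HA →L[ℂ] HC))) (X - Y) := by rw [u.inv_mul]
    _ = (↑u⁻¹ : (HA →L[ℂ] HC) →L[ℂ] (HA →L[ℂ] HC)) ((↑u : (HA →L[ℂ] HC) →L[ℂ] (HA →L[ℂ] HC)) (X - Y)) := rfl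
    _ = 0 := by rw [huu, h0, map_zero]
  rwa [sub_eq_zero] at hD
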